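/- Let p : X ⟶ Y be a morphism of sheaves of types on a site (C, J) whose underlying morphism of presheaves is J-locally surjective, and let N(p) be its Čech nerve, the simplicial object with N(p)_n = X ×_Y ⋯ ×_Y X (n+1 factors). Then the colimit in the category of J-sheaves of the simplicial object N(p) is Y, via the augmentation induced by p. -/

import Mathlib

/-!
A cocone `s` on the Čech nerve `N(f)` of `f : X ⟶ Y` yields a map `X ≅ N(f)₀ ⟶ s.pt`, and its
legs at `[1]` force this map to coequalize any two maps `Z ⟶ X` that agree after `f`. So when `f`
is an effective epimorphism the map descends uniquely to `Y`, and the augmentation is a colimit.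
In a category of sheaves of types every epimorphism is regular, hence effective, and locally
surjective morphisms are epimorphisms.
-/

open CategoryTheory CategoryTheory.Limits

/-- The augmentation of an augmented simplicial object, viewed as a cocone on the
underlying simplicial object. -/
def augmentationCocone {C : Type u} [Category.{v} C]
    (A : SimplicialObject.Augmented C) : Cocone A.left where
  pt := A.right
  ι := A.hom

namespace CategoryTheory.Arrow

open Opposite Simplicial

variable {C : Type*} [Category C] (f : Arrow C)
  [∀ n : ℕ, HasWidePullback.{0} f.right (fun _ : Fin (n + 1) => f.left) fun _ => f.hom]

noncomputable def toCechNerveZero : f.left ⟶ f.cechNerve.obj (op ⦋0⦌) :=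
  WidePullback.lift f.hom (fun _ => 𝟙 _) (by simp)

lemma toCechNerveZero_base : f.toCechNerveZero ≫ WidePullback.base _ = f.hom :=
  WidePullback.lift_base _ _ _ _

lemma cechNerve_map_const (n : SimplexCategory) (i : Fin (n.len + 1)) :
    f.cechNerve.map (SimplexCategory.const ⦋0⦌ n i).op =
      WidePullback.π _ i ≫ f.toCechNerveZero := by
  apply WidePullback.hom_ext
  · intro j
    erw [WidePullback.lift_π, Category.assoc, WidePullback.lift_π, Category.comp_id]
    rfl
  · erw [WidePullback.lift_base, Category.assoc, WidePullback.lift_base, WidePullback.π_arrow]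

section

variable {f} (s : Cocone f.cechNerve)

noncomputable def leftToCoconePt : f.left ⟶ s.pt :=
  f.toCechNerveZero ≫ s.ι.app (op ⦋0⦌)

lemma π_comp_leftToCoconePt (n : SimplexCategory) (i : Fin (n.len + 1)) :
    WidePullback.π _ i ≫ leftToCoconePt s = s.ι.app (op n) := by
  rw [leftToCoconePt, ← Category.assoc, ← cechNerve_map_const]
  exact s.w _

lemma leftToCoconePt_coequalizes {Z : C} (g₁ g₂ : Z ⟶ f.left) (h : g₁ ≫ f.hom = g₂ ≫ f.hom) :
    g₁ ≫ leftToCoconePt s = g₂ ≫ leftToCoconePt s := by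
  let z : Z ⟶ f.cechNerve.obj (op ⦋1⦌) :=
    WidePullback.lift (g₁ ≫ f.hom) ![g₁, g₂] (fun j => by fin_cases j <;> simp [h])
  have hz (j : Fin 2) : z ≫ WidePullback.π _ j = ![g₁, g₂] j := WidePullback.lift_π _ _ _ _ j
  calc g₁ ≫ leftToCoconePt s = z ≫ WidePullback.π _ 0 ≫ leftToCoconePt s := by
        rw [← Category.assoc, hz]; rfl
    _ = z ≫ WidePullback.π _ 1 ≫ leftToCoconePt s := by
        rw [π_comp_leftToCoconePt, π_comp_leftToCoconePt]
    _ = g₂ ≫ leftToCoconePt s := by rw [← Category.assoc, hz]; rfl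

noncomputable def rightToCoconePt [EffectiveEpi f.hom] : f.right ⟶ s.pt :=
  EffectiveEpi.desc f.hom (leftToCoconePt s) (leftToCoconePt_coequalizes s)

lemma hom_comp_rightToCoconePt [EffectiveEpi f.hom] :
    f.hom ≫ rightToCoconePt s = leftToCoconePt s :=
  EffectiveEpi.fac _ _ _

end

noncomputable def isColimitAugmentationCoconeOfEffectiveEpi [EffectiveEpi f.hom] :
    IsColimit (augmentationCocone f.augmentedCechNerve) where
  desc s := rightToCoconePt s
  fac (s : Cocone f.cechNerve) n := by
    show WidePullback.base _ ≫ rightToCoconePt s = s.ι.app n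
    rw [← WidePullback.π_arrow _ 0, Category.assoc, hom_comp_rightToCoconePt,
      π_comp_leftToCoconePt]
  uniq (s : Cocone f.cechNerve) (m : f.right ⟶ s.pt) hm := EffectiveEpi.uniq _ _ _ m <| by
    rw [← toCechNerveZero_base, Category.assoc]
    exact congrArg (f.toCechNerveZero ≫ ·) (hm (op ⦋0⦌))

end CategoryTheory.Arrow

/-- If `p : X ⟶ Y` is a locally surjective morphism of sheaves of types on a site
`(C, J)`, then the colimit (in sheaves) of the Čech nerve of `p` is `Y`, via the
augmentation. -/
theorem cechNerve_colimit_of_locallySurjective {C : Type u} [SmallCategory C]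
    (J : GrothendieckTopology C) {X Y : Sheaf J (Type u)} (p : X ⟶ Y)
    (hp : Presheaf.IsLocallySurjective J p.hom) :
    Nonempty (IsColimit (augmentationCocone (Arrow.mk p).augmentedCechNerve)) := by
  have : Epi p := Sheaf.epi_of_isLocallySurjective' p
  have : IsRegularEpi (Arrow.mk p).hom := IsRegularEpiCategory.regularEpiOfEpi p
  exact ⟨Arrow.isColimitAugmentationCoconeOfEffectiveEpi (Arrow.mk p)⟩
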